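/- Let y ∈ ℝ₊^{2m+1} have strictly positive components and let x⁰ ∈ ℝ^{m+1} be strictly positive; define the iterates x^{t+1} = T(x^t) for t ≥ 0 (they remain strictly positive). Then lim_{t→∞} I(x^{t+1}‖x^t) = 0 and lim_{t→∞} Σ_{j=0}^{m} |x^{t+1}_j − x^t_j| = 0. -/

import Mathlib

open Finset Filter

/-- Extension of `x : Fin (m+1) → ℝ` to `ℕ`, zero outside `[0, m]`. -/
def ext (m : ℕ) (x : Fin (m + 1) → ℝ) (k : ℕ) : ℝ :=
  if h : k < m + 1 then x ⟨k, h⟩ else 0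

/-- Autoconvolution `(x*x)_i = ∑_{j=0}^{i} x_{i-j} x_j`. -/
def aconv (m : ℕ) (x : Fin (m + 1) → ℝ) : Fin (2 * m + 1) → ℝ :=
  fun i => ∑ j ∈ Finset.range (i.1 + 1), ext m x (i.1 - j) * ext m x j

/-- The index `ℓ + j ∈ {0,…,2m}` for `ℓ, j ∈ {0,…,m}`. -/
def idx (m : ℕ) (ℓ j : Fin (m + 1)) : Fin (2 * m + 1) :=
  ⟨ℓ.1 + j.1, by have h1 := ℓ.isLt; have h2 := j.isLt; omega⟩

/-- One term of the I-divergence, with values in `[0,∞]`, with the conventions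
`0·log(0/b) = 0` and value `∞` if `a > 0 = b`. -/
noncomputable def termDiv (a b : ℝ) : ENNReal :=
  if a = 0 then ENNReal.ofReal b
  else if b = 0 then ⊤
  else ENNReal.ofReal (a * Real.log (a / b) - a + b)

/-- `[0,∞]`-valued I-divergence between vectors. -/
noncomputable def Idiv {n : ℕ} (u v : Fin n → ℝ) : ENNReal :=
  ∑ i, termDiv (u i) (v i)

/-- Real-valued I-divergence between vectors (used when the second argument is
positive wherever the first one is). -/
noncomputable def IdivR {n : ℕ} (u v : Fin n → ℝ) : ℝ :=
  ∑ i, (u i * Real.log (u i / v i) - u i + v i)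

/-- `[0,∞]`-valued I-divergence between `(2m+1) × (m+1)` matrices. -/
noncomputable def IdivM (m : ℕ) (M N : Fin (2 * m + 1) → Fin (m + 1) → ℝ) : ENNReal :=
  ∑ i, ∑ j, termDiv (M i j) (N i j)

/-- Real-valued I-divergence between `(2m+1) × (m+1)` matrices. -/
noncomputable def IdivMR (m : ℕ) (M N : Fin (2 * m + 1) → Fin (m + 1) → ℝ) : ℝ :=
  ∑ i, ∑ j, (M i j * Real.log (M i j / N i j) - M i j + N i j)

/-- The set 𝒴: nonnegative matrices supported on `{(i,j) : j ≤ i ≤ j+m}` with row sums `y`. -/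
def calY (m : ℕ) (y : Fin (2 * m + 1) → ℝ) (Y : Fin (2 * m + 1) → Fin (m + 1) → ℝ) : Prop :=
  (∀ i j, 0 ≤ Y i j) ∧
  (∀ (i : Fin (2 * m + 1)) (j : Fin (m + 1)), ¬(j.1 ≤ i.1 ∧ i.1 ≤ j.1 + m) → Y i j = 0) ∧
  (∀ i, ∑ j, Y i j = y i)

/-- The matrix `W(x)` with `W(x)_{ij} = x_{i-j} x_j` on the support and `0` elsewhere. -/
def Wmat (m : ℕ) (x : Fin (m + 1) → ℝ) (i : Fin (2 * m + 1)) (j : Fin (m + 1)) : ℝ :=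
  if h : j.1 ≤ i.1 ∧ i.1 ≤ j.1 + m then x ⟨i.1 - j.1, by omega⟩ * x j else 0

/-- The matrix `Y*(x)` with `Y*(x)_{ij} = (x_{i-j} x_j/(x*x)_i)·y_i` on the support. -/
noncomputable def Ystar (m : ℕ) (y : Fin (2 * m + 1) → ℝ) (x : Fin (m + 1) → ℝ)
    (i : Fin (2 * m + 1)) (j : Fin (m + 1)) : ℝ :=
  if h : j.1 ≤ i.1 ∧ i.1 ≤ j.1 + m then
    x ⟨i.1 - j.1, by omega⟩ * x j / aconv m x i * y i
  else 0

/-- `Ŷ_j = ∑_{i=0}^{m} Y_{i+j,i} + ∑_{i=j}^{j+m} Y_{ij}`. -/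
def Yhat (m : ℕ) (Y : Fin (2 * m + 1) → Fin (m + 1) → ℝ) (j : Fin (m + 1)) : ℝ :=
  (∑ ℓ : Fin (m + 1), Y (idx m ℓ j) ℓ) + ∑ ℓ : Fin (m + 1), Y (idx m ℓ j) j

/-- The algorithm map `T(x)_j = x_j (1/c) ∑_ℓ x_ℓ y_{ℓ+j}/(x*x)_{ℓ+j}`,
with `c = √(∑ y_i)`. -/
noncomputable def Tmap (m : ℕ) (y : Fin (2 * m + 1) → ℝ) (x : Fin (m + 1) → ℝ)
    (j : Fin (m + 1)) : ℝ :=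
  x j * (1 / Real.sqrt (∑ i, y i)) * ∑ ℓ, x ℓ * y (idx m ℓ j) / aconv m x (idx m ℓ j)

/-- The gradient `∇_j I(x) = 2 ∑_ℓ ( x_ℓ − x_ℓ y_{ℓ+j}/(x*x)_{ℓ+j} )`. -/
noncomputable def gradI (m : ℕ) (y : Fin (2 * m + 1) → ℝ) (x : Fin (m + 1) → ℝ)
    (j : Fin (m + 1)) : ℝ :=
  2 * ∑ ℓ, (x ℓ - x ℓ * y (idx m ℓ j) / aconv m x (idx m ℓ j))

/-! The iteration decreases `F(x) = I(y ‖ x*x)` by a definite amount. Concavity of the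
logarithm (the log-sum inequality), applied on each antidiagonal `{(j, k) : j + k = i}` with
weights `x_j x_k`, yields the descent inequality `F(T x) + 2c · I(T x ‖ x) ≤ F(x)`, where
`c = √(∑ y_i) = ∑_j T(x)_j`. As `F ≥ 0`, the divergences `I(x^{t+1} ‖ x^t)` are summable and so
tend to `0`; the Pinsker-type bound `(∑ |u_j - v_j|)² ≤ 2 (∑ u + ∑ v) · I(u ‖ v)`, from the
Hellinger bound and Cauchy–Schwarz, transfers this to the `ℓ¹` distance. -/

open Real

lemma sum_mul_log_div_le {ι : Type*} (s : Finset ι) {w v : ι → ℝ}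
    (hw : ∀ p ∈ s, 0 < w p) (hv : ∀ p ∈ s, 0 < v p) :
    ∑ p ∈ s, w p * log (v p / w p) ≤ (∑ p ∈ s, w p) * log ((∑ p ∈ s, v p) / ∑ p ∈ s, w p) := by
  rcases s.eq_empty_or_nonempty with rfl | hs
  · simp
  set W := ∑ p ∈ s, w p
  set V := ∑ p ∈ s, v p
  have hW : 0 < W := sum_pos hw hs
  have hV : 0 < V := sum_pos hv hs
  have hterm : ∀ p ∈ s, w p * log (v p / w p) - w p * log (V / W) ≤ v p * (W / V) - w p := by
    intro p hp
    have hwp := hw p hp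
    have hvp := hv p hp
    have hlog := Real.log_le_sub_one_of_pos (show 0 < v p / w p / (V / W) by positivity)
    rw [Real.log_div (by positivity) (by positivity)] at hlog
    calc w p * log (v p / w p) - w p * log (V / W)
        = w p * (log (v p / w p) - log (V / W)) := by ring
      _ ≤ w p * (v p / w p / (V / W) - 1) := mul_le_mul_of_nonneg_left hlog hwp.le
      _ = v p * (W / V) - w p := by field_simp
  have := sum_le_sum hterm
  rw [sum_sub_distrib, sum_sub_distrib, ← sum_mul, ← sum_mul] at this
  have hVW : V * (W / V) = W := mul_div_cancel₀ W hV.ne'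
  linarith

lemma sq_sqrt_sub_sqrt_le {a b : ℝ} (ha : 0 < a) (hb : 0 < b) :
    (√a - √b) ^ 2 ≤ a * log (a / b) - a + b := by
  obtain ⟨s, hs, rfl⟩ : ∃ s, 0 < s ∧ s ^ 2 = a := ⟨_, Real.sqrt_pos.2 ha, Real.sq_sqrt ha.le⟩
  obtain ⟨r, hr, rfl⟩ : ∃ r, 0 < r ∧ r ^ 2 = b := ⟨_, Real.sqrt_pos.2 hb, Real.sq_sqrt hb.le⟩
  have hlog : log (s ^ 2 / r ^ 2) = -2 * log (r / s) := by
    rw [← div_pow, Real.log_pow, ← inv_div, Real.log_inv]; push_cast; ring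
  have hle := mul_le_mul_of_nonneg_left (Real.log_le_sub_one_of_pos (div_pos hr hs)) (sq_nonneg s)
  have hsr : s ^ 2 * (r / s - 1) = s * r - s ^ 2 := by field_simp
  rw [Real.sqrt_sq hs.le, Real.sqrt_sq hr.le, hlog]
  nlinarith

lemma IdivR_eq {n : ℕ} (u v : Fin n → ℝ) :
    IdivR u v = ∑ i, u i * log (u i / v i) - ∑ i, u i + ∑ i, v i := by
  rw [IdivR, sum_add_distrib, sum_sub_distrib]

lemma IdivR_nonneg {n : ℕ} {u v : Fin n → ℝ} (hu : ∀ j, 0 < u j) (hv : ∀ j, 0 < v j) :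
    0 ≤ IdivR u v :=
  sum_nonneg fun j _ => (sq_nonneg _).trans (sq_sqrt_sub_sqrt_le (hu j) (hv j))

lemma sq_sum_abs_sub_le {n : ℕ} {u v : Fin n → ℝ} (hu : ∀ j, 0 < u j) (hv : ∀ j, 0 < v j) :
    (∑ j, |u j - v j|) ^ 2 ≤ 2 * (∑ j, u j + ∑ j, v j) * IdivR u v := by
  set f := fun j => |√(u j) - √(v j)|
  set g := fun j => √(u j) + √(v j)
  have hfg : ∀ j, f j * g j = |u j - v j| := by
    intro j
    have hsq : (√(u j) - √(v j)) * g j = u j - v j := by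
      linear_combination Real.sq_sqrt (hu j).le - Real.sq_sqrt (hv j).le
    rw [← abs_of_nonneg (show 0 ≤ g j by positivity), ← abs_mul, hsq]
  have hf : ∑ j, f j ^ 2 ≤ IdivR u v :=
    sum_le_sum fun j _ => (sq_abs _).trans_le (sq_sqrt_sub_sqrt_le (hu j) (hv j))
  have hg : ∑ j, g j ^ 2 ≤ 2 * (∑ j, u j + ∑ j, v j) := by
    rw [← sum_add_distrib, mul_sum]
    refine sum_le_sum fun j _ => ?_
    have := Real.sq_sqrt (hu j).le; have := Real.sq_sqrt (hv j).le
    nlinarith [sq_nonneg (√(u j) - √(v j))]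
  calc (∑ j, |u j - v j|) ^ 2 = (∑ j, f j * g j) ^ 2 := by simp_rw [hfg]
    _ ≤ (∑ j, f j ^ 2) * ∑ j, g j ^ 2 := sum_mul_sq_le_sq_mul_sq _ _ _
    _ ≤ IdivR u v * (2 * (∑ j, u j + ∑ j, v j)) :=
        mul_le_mul hf hg (sum_nonneg fun j _ => sq_nonneg _) (IdivR_nonneg hu hv)
    _ = 2 * (∑ j, u j + ∑ j, v j) * IdivR u v := mul_comm _ _

lemma tendsto_zero_of_add_mul_le {F D : ℕ → ℝ} {κ : ℝ} (hκ : 0 < κ) (hF : ∀ t, 0 ≤ F t)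
    (hD : ∀ t, 0 ≤ D t) (h : ∀ t, F (t + 1) + κ * D t ≤ F t) :
    Tendsto D atTop (nhds 0) := by
  have htel : ∀ n, κ * ∑ t ∈ range n, D t ≤ F 0 - F n := by
    intro n
    induction n with
    | zero => simp
    | succ n ih => rw [sum_range_succ, mul_add]; linarith [h n]
  refine (summable_of_sum_range_le (c := F 0 / κ) hD fun n => ?_).tendsto_atTop_zero
  rw [← mul_le_mul_iff_of_pos_left hκ, mul_div_cancel₀ _ hκ.ne']
  linarith [htel n, hF n]

def antidiag (m : ℕ) (i : Fin (2 * m + 1)) : Finset (Fin (m + 1) × Fin (m + 1)) :=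
  univ.filter fun p => idx m p.1 p.2 = i

lemma idx_comm (m : ℕ) (j k : Fin (m + 1)) : idx m j k = idx m k j := by
  simp only [idx, add_comm]

lemma aconv_eq_sum_antidiag (m : ℕ) (x : Fin (m + 1) → ℝ) (i : Fin (2 * m + 1)) :
    aconv m x i = ∑ p ∈ antidiag m i, x p.1 * x p.2 := by
  symm
  refine Finset.sum_bij_ne_zero (fun p _ _ => p.2.1) ?_ ?_ ?_ ?_
  · intro p hp _
    simp only [antidiag, mem_filter, mem_univ, true_and, idx, Fin.ext_iff] at hp
    simp only [mem_range]; omega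
  · intro p hp _ q hq _ h
    simp only [antidiag, mem_filter, mem_univ, true_and, idx, Fin.ext_iff] at hp hq
    ext <;> omega
  · intro j hj hne
    simp only [mem_range] at hj
    have hk : i.1 - j < m + 1 := by by_contra h; exact hne (by simp [_root_.ext, h])
    have hj' : j < m + 1 := by by_contra h; exact hne (by simp [_root_.ext, h])
    refine ⟨(⟨i.1 - j, hk⟩, ⟨j, hj'⟩), ?_, ?_, rfl⟩
    · simp only [antidiag, mem_filter, mem_univ, true_and, idx, Fin.ext_iff]; omega
    · simpa [_root_.ext, hk, hj'] using hne
  · intro p hp _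
    simp only [antidiag, mem_filter, mem_univ, true_and, idx, Fin.ext_iff] at hp
    have : i.1 - p.2.1 = p.1.1 := by omega
    simp [_root_.ext, this, p.1.isLt, p.2.isLt]

lemma sum_sum_antidiag (m : ℕ) (F : Fin (2 * m + 1) → Fin (m + 1) × Fin (m + 1) → ℝ) :
    ∑ i, ∑ p ∈ antidiag m i, F i p = ∑ j, ∑ k, F (idx m j k) (j, k) := by
  calc ∑ i, ∑ p ∈ antidiag m i, F i p = ∑ i, ∑ p ∈ antidiag m i, F (idx m p.1 p.2) p :=
        sum_congr rfl fun i _ => sum_congr rfl fun p hp => by rw [(mem_filter.1 hp).2]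
    _ = ∑ j, ∑ k, F (idx m j k) (j, k) := by
        rw [← Fintype.sum_prod_type' (fun j k => F (idx m j k) (j, k))]
        exact sum_fiberwise univ (fun p => idx m p.1 p.2) (fun p => F (idx m p.1 p.2) p)

lemma sum_mul_aconv (m : ℕ) (x : Fin (m + 1) → ℝ) (G : Fin (2 * m + 1) → ℝ) :
    ∑ i, G i * aconv m x i = ∑ j, ∑ k, x j * x k * G (idx m j k) := by
  simp_rw [aconv_eq_sum_antidiag, mul_sum, sum_sum_antidiag, mul_comm]

lemma sum_aconv (m : ℕ) (x : Fin (m + 1) → ℝ) : ∑ i, aconv m x i = (∑ j, x j) ^ 2 := by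
  simpa [sq, sum_mul_sum] using sum_mul_aconv m x 1

lemma aconv_pos (m : ℕ) {x : Fin (m + 1) → ℝ} (hx : ∀ j, 0 < x j) (i : Fin (2 * m + 1)) :
    0 < aconv m x i := by
  rw [aconv_eq_sum_antidiag]
  have hi := i.isLt
  refine sum_pos (fun p _ => mul_pos (hx _) (hx _))
    ⟨(⟨i - min i.1 m, by omega⟩, ⟨min i.1 m, by omega⟩), ?_⟩
  simp only [antidiag, mem_filter, mem_univ, true_and, idx, Fin.ext_iff]
  omega

lemma sqrt_mul_Tmap (m : ℕ) (y : Fin (2 * m + 1) → ℝ) (hy : 0 < ∑ i, y i)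
    (x : Fin (m + 1) → ℝ) (j : Fin (m + 1)) :
    √(∑ i, y i) * Tmap m y x j = x j * ∑ k, x k * (y (idx m k j) / aconv m x (idx m k j)) := by
  have hc : √(∑ i, y i) ≠ 0 := (Real.sqrt_pos.2 hy).ne'
  simp only [Tmap, mul_div_assoc]
  field_simp

lemma sum_Tmap (m : ℕ) (y : Fin (2 * m + 1) → ℝ) {x : Fin (m + 1) → ℝ} (hx : ∀ j, 0 < x j) :
    ∑ j, Tmap m y x j = √(∑ i, y i) := by
  have hya : ∑ i, y i = ∑ j, ∑ k, x j * x k * (y (idx m j k) / aconv m x (idx m j k)) := by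
    rw [← sum_mul_aconv m x fun i => y i / aconv m x i]
    exact sum_congr rfl fun i _ => (div_mul_cancel₀ _ (aconv_pos m hx i).ne').symm
  calc ∑ j, Tmap m y x j
      = (1 / √(∑ i, y i)) * ∑ j, ∑ k, x j * x k * (y (idx m j k) / aconv m x (idx m j k)) := by
        simp only [Tmap, mul_sum]
        refine sum_congr rfl fun j _ => sum_congr rfl fun k _ => ?_
        rw [idx_comm]; ring
    _ = √(∑ i, y i) := by rw [← hya, one_div_mul_eq_div, Real.div_sqrt]

lemma Tmap_pos (m : ℕ) {y : Fin (2 * m + 1) → ℝ} (hy : ∀ i, 0 < y i)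
    {x : Fin (m + 1) → ℝ} (hx : ∀ j, 0 < x j) (j : Fin (m + 1)) : 0 < Tmap m y x j := by
  have hc : 0 < √(∑ i, y i) := Real.sqrt_pos.2 (sum_pos (fun i _ => hy i) univ_nonempty)
  refine mul_pos (mul_pos (hx j) (one_div_pos.2 hc)) (sum_pos (fun k _ => ?_) univ_nonempty)
  exact div_pos (mul_pos (hx k) (hy _)) (aconv_pos m hx _)

lemma sum_log_Tmap_le (m : ℕ) {y : Fin (2 * m + 1) → ℝ} (hy : ∀ i, 0 < y i)
    {x : Fin (m + 1) → ℝ} (hx : ∀ j, 0 < x j) :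
    2 * √(∑ i, y i) * ∑ j, Tmap m y x j * log (Tmap m y x j / x j)
      ≤ ∑ i, y i * log (aconv m (Tmap m y x) i / aconv m x i) := by
  set x' := Tmap m y x
  set G : Fin (2 * m + 1) → ℝ := fun i => y i / aconv m x i
  set L : Fin (m + 1) → ℝ := fun j => log (x' j / x j)
  have hx' : ∀ j, 0 < x' j := Tmap_pos m hy hx
  have hS : 0 < ∑ i, y i := sum_pos (fun i _ => hy i) univ_nonempty
  have hjensen : ∀ i, ∑ p ∈ antidiag m i, x p.1 * x p.2 * (L p.1 + L p.2)
      ≤ aconv m x i * log (aconv m x' i / aconv m x i) := by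
    intro i
    have hlog : ∀ p : Fin (m + 1) × Fin (m + 1),
        L p.1 + L p.2 = log (x' p.1 * x' p.2 / (x p.1 * x p.2)) := by
      intro p
      have := hx p.1; have := hx p.2; have := hx' p.1; have := hx' p.2
      rw [mul_div_mul_comm, Real.log_mul (by positivity) (by positivity)]
    simp_rw [hlog, aconv_eq_sum_antidiag m x', aconv_eq_sum_antidiag m x]
    exact sum_mul_log_div_le _ (fun p _ => mul_pos (hx p.1) (hx p.2))
      (fun p _ => mul_pos (hx' p.1) (hx' p.2))
  have hsymm : ∑ j, ∑ k, x j * x k * G (idx m j k) * (L j + L k)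
      = 2 * ∑ j, L j * (x j * ∑ k, x k * G (idx m k j)) := by
    simp_rw [mul_add, sum_add_distrib]
    rw [sum_comm (f := fun j k => x j * x k * G (idx m j k) * L k), two_mul]
    congr 1 <;> simp_rw [mul_sum] <;>
      exact sum_congr rfl fun j _ => sum_congr rfl fun k _ => by rw [idx_comm]; ring
  calc 2 * √(∑ i, y i) * ∑ j, x' j * L j
      = ∑ j, ∑ k, x j * x k * G (idx m j k) * (L j + L k) := by
        have hT : ∀ j, x j * ∑ k, x k * G (idx m k j) = √(∑ i, y i) * x' j :=
          fun j => (sqrt_mul_Tmap m y hS x j).symm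
        simp_rw [hsymm, hT, mul_assoc, mul_sum]
        exact sum_congr rfl fun j _ => by ring
    _ = ∑ i, G i * ∑ p ∈ antidiag m i, x p.1 * x p.2 * (L p.1 + L p.2) := by
        simp_rw [mul_sum]
        rw [sum_sum_antidiag m fun i p => G i * (x p.1 * x p.2 * (L p.1 + L p.2))]
        exact sum_congr rfl fun j _ => sum_congr rfl fun k _ => by ring
    _ ≤ ∑ i, G i * (aconv m x i * log (aconv m x' i / aconv m x i)) :=
        sum_le_sum fun i _ =>
          mul_le_mul_of_nonneg_left (hjensen i) (div_pos (hy i) (aconv_pos m hx i)).le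
    _ = ∑ i, y i * log (aconv m x' i / aconv m x i) :=
        sum_congr rfl fun i _ => by rw [← mul_assoc, div_mul_cancel₀ _ (aconv_pos m hx i).ne']

lemma IdivR_aconv_Tmap_add_le (m : ℕ) {y : Fin (2 * m + 1) → ℝ} (hy : ∀ i, 0 < y i)
    {x : Fin (m + 1) → ℝ} (hx : ∀ j, 0 < x j) :
    IdivR y (aconv m (Tmap m y x)) + 2 * √(∑ i, y i) * IdivR (Tmap m y x) x
      ≤ IdivR y (aconv m x) := by
  have hmain := sum_log_Tmap_le m hy hx
  have hsum := sum_Tmap m y hx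
  set c := √(∑ i, y i)
  set x' := Tmap m y x
  have hx' : ∀ j, 0 < x' j := Tmap_pos m hy hx
  have hc2 : c ^ 2 = ∑ i, y i := Real.sq_sqrt (sum_nonneg fun i _ => (hy i).le)
  have hlog : ∀ i, y i * log (y i / aconv m x' i)
      = y i * log (y i / aconv m x i) - y i * log (aconv m x' i / aconv m x i) := by
    intro i
    have := aconv_pos m hx i; have := aconv_pos m hx' i; have := hy i
    rw [Real.log_div (by positivity) (by positivity), Real.log_div (by positivity) (by positivity),
      Real.log_div (by positivity) (by positivity)]
    ring
  simp only [IdivR_eq, hlog, sum_sub_distrib, sum_aconv, hsum]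
  nlinarith [sq_nonneg (∑ j, x j - c)]

/-- along the iterates of the algorithm, `I(x^{t+1}‖x^t) → 0` and
`∑_j |x^{t+1}_j − x^t_j| → 0`. -/
theorem stmt15 (m : ℕ) (y : Fin (2 * m + 1) → ℝ) (hy : ∀ i, 0 < y i)
    (xs : ℕ → Fin (m + 1) → ℝ) (h0 : ∀ j, 0 < xs 0 j)
    (hstep : ∀ t, xs (t + 1) = Tmap m y (xs t)) :
    Filter.Tendsto (fun t => IdivR (xs (t + 1)) (xs t)) Filter.atTop (nhds 0) ∧
    Filter.Tendsto (fun t => ∑ j, |xs (t + 1) j - xs t j|) Filter.atTop (nhds 0) := by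
  have hpos : ∀ t j, 0 < xs t j := by
    intro t
    induction t with
    | zero => exact h0
    | succ t ih => rw [hstep t]; exact Tmap_pos m hy ih
  have hc : 0 < √(∑ i, y i) := Real.sqrt_pos.2 (sum_pos (fun i _ => hy i) univ_nonempty)
  have hdiv : Tendsto (fun t => IdivR (xs (t + 1)) (xs t)) atTop (nhds 0) :=
    tendsto_zero_of_add_mul_le (F := fun t => IdivR y (aconv m (xs t))) (mul_pos two_pos hc)
      (fun t => IdivR_nonneg hy (aconv_pos m (hpos t)))
      (fun t => IdivR_nonneg (hpos (t + 1)) (hpos t))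
      (fun t => by simpa only [hstep t] using IdivR_aconv_Tmap_add_le m hy (hpos t))
  -- `xs 0` need not have mass `√(∑ i, y i)`, so the masses are constant only from `t = 1` on.
  have hmass : Tendsto (fun t => 2 * (∑ j, xs (t + 1) j + ∑ j, xs t j)) atTop
      (nhds (4 * √(∑ i, y i))) := by
    refine (tendsto_add_atTop_iff_nat 1).1 (tendsto_const_nhds.congr fun t => ?_)
    rw [hstep (t + 1), sum_Tmap m y (hpos _), hstep t, sum_Tmap m y (hpos _)]
    ring
  refine ⟨hdiv, squeeze_zero (fun t => sum_nonneg fun j _ => abs_nonneg _)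
    (fun t => Real.le_sqrt_of_sq_le (sq_sum_abs_sub_le (hpos (t + 1)) (hpos t))) ?_⟩
  simpa using (hmass.mul hdiv).sqrt
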